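/- For even m, the set of self-dual ternary trees with m internal vertices is in bijection with the set of ternary trees with m/2 internal vertices. -/
import Mathlib


/-- Ternary trees: the free algebra on one generator `leaf` with one ternary
operation `node`. -/
inductive TernaryTree : Type
  | leaf : TernaryTree
  | node : TernaryTree → TernaryTree → TernaryTree → TernaryTree
deriving DecidableEq

namespace TernaryTree

/-- Number of internal vertices (applications of the ternary operation). -/
def internal : TernaryTree → ℕ
  | leaf => 0
  | node a b c => internal a + internal b + internal c + 1

/-- The dual of a ternary tree. -/
def dual : TernaryTree → TernaryTree
  | leaf => leaf
  | node a b c => node (dual c) (dual b) (dual a)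

theorem dual_dual (t : TernaryTree) : t.dual.dual = t := by
  induction t with
  | leaf => rfl
  | node a b c ia ib ic => simp [dual, ia, ib, ic]

theorem internal_dual (t : TernaryTree) : t.dual.internal = t.internal := by
  induction t with
  | leaf => rfl
  | node a b c ia ib ic => simp [dual, internal, ia, ib, ic]; ring

/-- Doubling map: tree with n internal vertices to self-dual tree with 2n. -/
def dbl : TernaryTree → TernaryTree
  | leaf => leaf
  | node a b c => node a (node b (dbl c) b.dual) a.dual

/-- Halving map (inverse of `dbl` on even self-dual trees). -/
def hlv : TernaryTree → TernaryTree
  | leaf => leaf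
  | node a (node b d _) _ => node a b (hlv d)
  | node _ leaf _ => leaf

theorem dbl_dual (t : TernaryTree) : (dbl t).dual = dbl t := by
  induction t with
  | leaf => rfl
  | node a b c ia ib ic => simp [dbl, dual, dual_dual, ic]

theorem dbl_internal (t : TernaryTree) : (dbl t).internal = 2 * t.internal := by
  induction t with
  | leaf => rfl
  | node a b c ia ib ic =>
    simp [dbl, internal, internal_dual, ic]; ring

theorem hlv_dbl (t : TernaryTree) : hlv (dbl t) = t := by
  induction t with
  | leaf => rfl
  | node a b c ia ib ic => simp [dbl, hlv, ic]

theorem dbl_hlv (n : ℕ) : ∀ t : TernaryTree, t.internal = n → t.dual = t →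
    Even n → dbl (hlv t) = t := by
  induction n using Nat.strong_induction_on with
  | _ n ih =>
    intro t hn hd he
    match t with
    | leaf => rfl
    | node a b c =>
      simp only [dual, node.injEq] at hd
      obtain ⟨hca, hb, hac⟩ := hd
      match b with
      | leaf =>
        exfalso
        simp only [internal] at hn
        have : c.internal = a.internal := by rw [← hac, internal_dual]
        obtain ⟨k, hk⟩ := he
        omega
      | node p q r =>
        simp only [dual, node.injEq] at hb
        obtain ⟨hrp, hq, hpr⟩ := hb
        have hca' : c.internal = a.internal := by rw [← hac, internal_dual]
        have hrp' : r.internal = p.internal := by rw [← hpr, internal_dual]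
        simp only [internal] at hn
        have hqlt : q.internal < n := by omega
        have hqe : Even q.internal := by
          rcases he with ⟨k, hk⟩; exact ⟨k - a.internal - p.internal - 1, by omega⟩
        have hdq := ih q.internal hqlt q rfl hq hqe
        simp only [hlv, dbl, hdq, hpr, hac]

end TernaryTree

/-- For even `m`, self-dual ternary trees with `m` internal vertices are in
bijection with ternary trees with `m/2` internal vertices. -/
theorem selfdual_equiv_even (m : ℕ) (hm : Even m) :
    Nonempty ({t : TernaryTree // t.dual = t ∧ t.internal = m} ≃
      {t : TernaryTree // t.internal = m / 2}) := by
  refine ⟨{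
    toFun := fun t => ⟨t.1.hlv, ?_⟩
    invFun := fun s => ⟨s.1.dbl, TernaryTree.dbl_dual _, ?_⟩
    left_inv := fun t => ?_
    right_inv := fun s => ?_ }⟩
  · obtain ⟨t, hd, hn⟩ := t
    have h1 := TernaryTree.dbl_hlv m t hn hd hm
    have h2 := TernaryTree.dbl_internal t.hlv
    rw [h1, hn] at h2
    show t.hlv.internal = m / 2
    omega
  · rw [TernaryTree.dbl_internal, s.2]
    obtain ⟨k, hk⟩ := hm; omega
  · obtain ⟨t, hd, hn⟩ := t
    simp only [Subtype.mk.injEq]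
    exact TernaryTree.dbl_hlv m t hn hd hm
  · simp [TernaryTree.hlv_dbl]
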